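/- arXiv:2102.04703 — 5 statements merged into one kernel-verified Lean document; each statement's English description precedes it below -/
import Mathlib

section
/- Let (θ,θ') be DNFs over variables Σ satisfying f_θ(x^u)=1 for all u∈U, f_{θ'}(0^Σ)=1, and f_θ + f_{θ'} ≤ 1 pointwise. Then Σ₀' := ⋃_{(Σ₀,Σ₁)∈θ} Σ₀ is a cover of U, i.e., ⋃_{σ∈Σ₀'} σ = U. -/
open Classical in
/-- Evaluation of a DNF on an input, as a {0,1}-valued function. -/
noncomputable def dnfEval {V : Type} (θ : Finset (Finset V × Finset V)) (x : V → Bool) : ℕ :=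
  if ∃ p ∈ θ, (∀ v ∈ p.1, x v = true) ∧ (∀ v ∈ p.2, x v = false) then 1 else 0

/-- for a feasible DNF pair on the Haussler data, the union of the
positive parts of the terms of θ is a cover of U. -/
theorem stmt_8 {U : Type} [Fintype U] [DecidableEq U] [Nonempty U]
    (Sig : Finset (Finset U))
    (θ θ' : Finset (Finset (Finset U) × Finset (Finset U)))
    (hθwf : ∀ p ∈ θ, p.1 ⊆ Sig ∧ p.2 ⊆ Sig ∧ Disjoint p.1 p.2)
    (hθ'wf : ∀ p ∈ θ', p.1 ⊆ Sig ∧ p.2 ⊆ Sig ∧ Disjoint p.1 p.2)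
    (hA : ∀ u : U, dnfEval θ (fun σ => decide (u ∈ σ)) = 1)
    (hB : dnfEval θ' (fun _ => false) = 1)
    (hsum : ∀ x : Finset U → Bool, dnfEval θ x + dnfEval θ' x ≤ 1) :
    (θ.biUnion (fun p => p.1)).biUnion id = Finset.univ := by
  -- θ evaluates to 0 on the all-zero input
  have hθ0 : dnfEval θ (fun _ => false) = 0 := by
    have := hsum (fun _ => false)
    rw [hB] at this
    omega
  apply Finset.eq_univ_iff_forall.mpr
  intro u
  have h := hA u
  unfold dnfEval at h
  split at h
  case isFalse => simp at h
  case isTrue hex =>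
    obtain ⟨p, hp, h1, h2⟩ := hex
    -- p.1 must be nonempty, otherwise θ accepts the all-zero input
    have hne : p.1.Nonempty := by
      by_contra hemp
      rw [Finset.not_nonempty_iff_eq_empty] at hemp
      have : dnfEval θ (fun _ => false) = 1 := by
        unfold dnfEval
        rw [if_pos]
        exact ⟨p, hp, by simp [hemp], fun v _ => rfl⟩
      omega
    obtain ⟨σ, hσ⟩ := hne
    have huσ : u ∈ σ := by simpa using h1 σ hσ
    simp only [Finset.mem_biUnion, id]
    exact ⟨σ, ⟨p, hp, hσ⟩, huσ⟩
end

section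
/- Let (θ,θ') be DNFs over variables Σ satisfying f_θ(x^u)=1 for all u∈U, f_{θ'}(0^Σ)=1, and f_θ·f_{θ'} = 0 pointwise. Then there exists Σ₁ ⊆ Σ with (∅,Σ₁) ∈ θ', and any such Σ₁ is a cover of U: ⋃_{σ∈Σ₁} σ = U. -/
/-- for a feasible DNF pair on the Haussler data, θ' contains a term
of the form (∅, Σ₁), and every such Σ₁ is a cover of U. -/
theorem stmt_9 {U : Type} [Fintype U] [DecidableEq U] [Nonempty U]
    (Sig : Finset (Finset U))
    (θ θ' : Finset (Finset (Finset U) × Finset (Finset U)))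
    (hθwf : ∀ p ∈ θ, p.1 ⊆ Sig ∧ p.2 ⊆ Sig ∧ Disjoint p.1 p.2)
    (hθ'wf : ∀ p ∈ θ', p.1 ⊆ Sig ∧ p.2 ⊆ Sig ∧ Disjoint p.1 p.2)
    (hA : ∀ u : U, dnfEval θ (fun σ => decide (u ∈ σ)) = 1)
    (hB : dnfEval θ' (fun _ => false) = 1)
    (hprod : ∀ x : Finset U → Bool, dnfEval θ x * dnfEval θ' x = 0) :
    (∃ Sig₁ : Finset (Finset U), ((∅ : Finset (Finset U)), Sig₁) ∈ θ') ∧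
    (∀ Sig₁ : Finset (Finset U), ((∅ : Finset (Finset U)), Sig₁) ∈ θ' →
      Sig₁.biUnion id = Finset.univ) := by
  constructor
  · -- from hB
    unfold dnfEval at hB
    split at hB
    · obtain ⟨p, hp, h1, h2⟩ := ‹∃ p ∈ θ', _›
      have hp1 : p.1 = ∅ := by
        by_contra h
        obtain ⟨v, hv⟩ := Finset.nonempty_iff_ne_empty.mpr h
        simpa using h1 v hv
      exact ⟨p.2, by rwa [← hp1, Prod.mk.eta]⟩
    · simp at hB
  · intro Sig₁ hmem
    ext u
    simp only [Finset.mem_biUnion, id, Finset.mem_univ, iff_true]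
    by_contra h
    push_neg at h
    have hθ'1 : dnfEval θ' (fun σ => decide (u ∈ σ)) = 1 := by
      unfold dnfEval
      rw [if_pos]
      exact ⟨(∅, Sig₁), hmem, by simp, fun v hv => by simpa using h v hv⟩
    have := hprod (fun σ => decide (u ∈ σ))
    rw [hA u, hθ'1] at this
    simp at this
end

section
/- Let U be finite and nonempty, Σ ⊆ 2^U, m ∈ ℕ. There exists a set cover Σ' ⊆ Σ of U with |Σ'| ≤ m if and only if there exist DNFs (θ,θ') over variables Σ with R_l(θ)+R_l(θ') ≤ 2m, f_θ(x^u)=1 for all u∈U, f_{θ'}(0^Σ)=1, and f_θ + f_{θ'} ≤ 1 pointwise. -/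
/-- Length of a DNF: sum of term sizes. -/
def dnfLength {V : Type} [DecidableEq V] (θ : Finset (Finset V × Finset V)) : ℕ :=
  ∑ p ∈ θ, (p.1.card + p.2.card)

lemma dnfEval_le_one {V : Type} (θ : Finset (Finset V × Finset V)) (x : V → Bool) :
    dnfEval θ x ≤ 1 := by
  unfold dnfEval; split <;> simp

lemma dnfEval_eq_one {V : Type} {θ : Finset (Finset V × Finset V)} {x : V → Bool}
    (h : ∃ p ∈ θ, (∀ v ∈ p.1, x v = true) ∧ (∀ v ∈ p.2, x v = false)) :
    dnfEval θ x = 1 := by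
  unfold dnfEval; rw [if_pos h]

lemma dnfEval_eq_zero {V : Type} {θ : Finset (Finset V × Finset V)} {x : V → Bool}
    (h : ¬ ∃ p ∈ θ, (∀ v ∈ p.1, x v = true) ∧ (∀ v ∈ p.2, x v = false)) :
    dnfEval θ x = 0 := by
  unfold dnfEval; rw [if_neg h]

lemma exists_of_dnfEval_eq_one {V : Type} {θ : Finset (Finset V × Finset V)} {x : V → Bool}
    (h : dnfEval θ x = 1) :
    ∃ p ∈ θ, (∀ v ∈ p.1, x v = true) ∧ (∀ v ∈ p.2, x v = false) := by
  by_contra hc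
  rw [dnfEval_eq_zero hc] at h
  exact absurd h (by norm_num)

/-- there is a set cover of size at most m iff there is a feasible
DNF pair for the Haussler data of total length at most 2m. -/
theorem stmt_11 {U : Type} [Fintype U] [DecidableEq U] [Nonempty U]
    (Sig : Finset (Finset U)) (m : ℕ) :
    (∃ Sig' : Finset (Finset U), Sig' ⊆ Sig ∧ (∀ u : U, ∃ σ ∈ Sig', u ∈ σ) ∧
      Sig'.card ≤ m) ↔
    (∃ θ θ' : Finset (Finset (Finset U) × Finset (Finset U)),
      (∀ p ∈ θ, p.1 ⊆ Sig ∧ p.2 ⊆ Sig ∧ Disjoint p.1 p.2) ∧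
      (∀ p ∈ θ', p.1 ⊆ Sig ∧ p.2 ⊆ Sig ∧ Disjoint p.1 p.2) ∧
      dnfLength θ + dnfLength θ' ≤ 2 * m ∧
      (∀ u : U, dnfEval θ (fun σ => decide (u ∈ σ)) = 1) ∧
      dnfEval θ' (fun _ => false) = 1 ∧
      (∀ x : Finset U → Bool, dnfEval θ x + dnfEval θ' x ≤ 1)) := by
  constructor
  · rintro ⟨S, hSsub, hcov, hcard⟩
    refine ⟨S.image (fun σ => (({σ} : Finset (Finset U)), (∅ : Finset (Finset U)))),
      {((∅ : Finset (Finset U)), S)}, ?_, ?_, ?_, ?_, ?_, ?_⟩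
    · intro p hp
      simp only [Finset.mem_image] at hp
      obtain ⟨σ, hσ, rfl⟩ := hp
      exact ⟨Finset.singleton_subset_iff.2 (hSsub hσ), Finset.empty_subset _, by simp⟩
    · intro p hp
      simp only [Finset.mem_singleton] at hp
      subst hp
      exact ⟨Finset.empty_subset _, hSsub, by simp⟩
    · have h1 : dnfLength (S.image (fun σ => (({σ} : Finset (Finset U)), (∅ : Finset (Finset U)))))
          = S.card := by
        rw [dnfLength, Finset.sum_image (by intro a _ b _ h; simpa using h)]
        simp
      have h2 : dnfLength ({((∅ : Finset (Finset U)), S)} :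
          Finset (Finset (Finset U) × Finset (Finset U))) = S.card := by
        simp [dnfLength]
      rw [h1, h2]; omega
    · intro u
      obtain ⟨σ, hσS, hσu⟩ := hcov u
      refine dnfEval_eq_one ⟨({σ}, ∅), Finset.mem_image_of_mem _ hσS, ?_, ?_⟩
      · intro v hv
        simp only [Finset.mem_singleton] at hv
        subst hv
        simpa using hσu
      · simp
    · exact dnfEval_eq_one ⟨(∅, S), Finset.mem_singleton_self _, by simp, by simp⟩
    · intro x
      by_cases hx : ∃ σ ∈ S, x σ = true
      · have : dnfEval ({((∅ : Finset (Finset U)), S)} :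
            Finset (Finset (Finset U) × Finset (Finset U))) x = 0 := by
          apply dnfEval_eq_zero
          rintro ⟨p, hp, -, h2⟩
          simp only [Finset.mem_singleton] at hp
          subst hp
          obtain ⟨σ, hσ, hσx⟩ := hx
          simp [h2 σ hσ] at hσx
        rw [this]
        simpa using dnfEval_le_one _ x
      · have : dnfEval (S.image (fun σ => (({σ} : Finset (Finset U)),
            (∅ : Finset (Finset U))))) x = 0 := by
          apply dnfEval_eq_zero
          rintro ⟨p, hp, h1, -⟩
          simp only [Finset.mem_image] at hp
          obtain ⟨σ, hσ, rfl⟩ := hp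
          exact hx ⟨σ, hσ, h1 σ (Finset.mem_singleton_self _)⟩
        rw [this]
        simpa using dnfEval_le_one _ x
  · rintro ⟨θ, θ', hθS, hθ'S, hlen, hevalU, heval0, hle⟩
    obtain ⟨p', hp', h1', h2'⟩ := exists_of_dnfEval_eq_one heval0
    -- positive part of p' is empty
    have hp'1 : p'.1 = ∅ := by
      rw [Finset.eq_empty_iff_forall_notMem]
      intro v hv
      simpa using h1' v hv
    -- every term of θ has nonempty positive part
    have hθzero : dnfEval θ (fun _ => false) = 0 := by
      have := hle (fun _ => false)
      rw [heval0] at this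
      omega
    have hpos : ∀ p ∈ θ, p.1.Nonempty := by
      intro p hp
      rw [Finset.nonempty_iff_ne_empty]
      intro he
      have : dnfEval θ (fun _ => false) = 1 :=
        dnfEval_eq_one ⟨p, hp, by simp [he], by simp⟩
      omega
    -- the two candidate covers
    classical
    set f : Finset (Finset U) × Finset (Finset U) → Finset U :=
      fun p => if h : p.1.Nonempty then h.choose else ∅ with hf
    have hfmem : ∀ p ∈ θ, f p ∈ p.1 := by
      intro p hp
      have h := hpos p hp
      simp only [hf, dif_pos h]
      exact h.choose_spec
    have hC1cov : ∀ u : U, ∃ σ ∈ θ.image f, u ∈ σ := by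
      intro u
      obtain ⟨p, hp, h1, -⟩ := exists_of_dnfEval_eq_one (hevalU u)
      refine ⟨f p, Finset.mem_image_of_mem _ hp, ?_⟩
      have := h1 (f p) (hfmem p hp)
      simpa using this
    have hC1sub : θ.image f ⊆ Sig := by
      intro σ hσ
      simp only [Finset.mem_image] at hσ
      obtain ⟨p, hp, rfl⟩ := hσ
      exact (hθS p hp).1 (hfmem p hp)
    have hC2cov : ∀ u : U, ∃ σ ∈ p'.2, u ∈ σ := by
      intro u
      have hz : dnfEval θ' (fun σ => decide (u ∈ σ)) = 0 := by
        have := hle (fun σ => decide (u ∈ σ))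
        rw [hevalU u] at this
        omega
      by_contra hc
      push_neg at hc
      have : dnfEval θ' (fun σ => decide (u ∈ σ)) = 1 := by
        refine dnfEval_eq_one ⟨p', hp', by simp [hp'1], ?_⟩
        intro v hv
        simpa using hc v hv
      omega
    have hC2sub : p'.2 ⊆ Sig := (hθ'S p' hp').2.1
    -- cardinality bounds
    have hb1 : θ.card ≤ dnfLength θ := by
      rw [dnfLength]
      calc θ.card = ∑ _p ∈ θ, 1 := by simp
        _ ≤ ∑ p ∈ θ, (p.1.card + p.2.card) := by
            apply Finset.sum_le_sum
            intro p hp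
            have := (hpos p hp).card_pos
            omega
    have hb2 : p'.2.card ≤ dnfLength θ' := by
      rw [dnfLength]
      calc p'.2.card ≤ p'.1.card + p'.2.card := by omega
        _ ≤ ∑ p ∈ θ', (p.1.card + p.2.card) :=
            Finset.single_le_sum (f := fun p => p.1.card + p.2.card) (fun i _ => Nat.zero_le _) hp'
    by_cases hm : θ.card ≤ m
    · exact ⟨θ.image f, hC1sub, hC1cov, le_trans Finset.card_image_le hm⟩
    · exact ⟨p'.2, hC2sub, hC2cov, by omega⟩
end

section
/- Suppose n:Θ→Θ satisfies f_{n(σ)}=1−f_σ and R(n(σ)) ≤ R(σ). Let θ̂_C be an optimal solution to the separation problem for (A,B) (minimizing R over feasible separators), let (θ̂_S, θ̂'_S) be an optimal solution to the partial-separation problem (minimizing R(θ)+R(θ') over feasible pairs), and let (θ_S, θ'_S) be any feasible pair. Then min(R(θ_S), R(n(θ'_S))) / R(θ̂_C) ≤ (R(θ_S)+R(θ'_S)) / (R(θ̂_S)+R(θ̂'_S)), assuming R(θ̂_C) > 0 and R(θ̂_S)+R(θ̂'_S) > 0. -/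
/-- the performance ratio of the cover extracted via g from a feasible
partial-separation pair is bounded by the performance ratio of that pair. -/
theorem stmt_13 {J Θ : Type} [Fintype J] [Nonempty J] [Nonempty Θ]
    (A B : Set (J → Bool)) (hA : A.Nonempty) (hB : B.Nonempty) (hAB : Disjoint A B)
    (f : Θ → (J → Bool) → ℕ) (hf01 : ∀ σ x, f σ x ≤ 1)
    (R : Θ → ℕ)
    (n : Θ → Θ) (hn : ∀ σ x, f (n σ) x = 1 - f σ x) (hnR : ∀ σ, R (n σ) ≤ R σ)
    (θC : Θ) (hθC : (∀ x ∈ A, f θC x = 1) ∧ (∀ x ∈ B, f θC x = 0))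
    (hθCopt : ∀ σ : Θ, ((∀ x ∈ A, f σ x = 1) ∧ (∀ x ∈ B, f σ x = 0)) → R θC ≤ R σ)
    (θS θS' : Θ)
    (hθS : (∀ x ∈ A, f θS x = 1) ∧ (∀ x ∈ B, f θS' x = 1) ∧ (∀ x, f θS x + f θS' x ≤ 1))
    (hθSopt : ∀ σ σ' : Θ,
      ((∀ x ∈ A, f σ x = 1) ∧ (∀ x ∈ B, f σ' x = 1) ∧ (∀ x, f σ x + f σ' x ≤ 1)) →
      R θS + R θS' ≤ R σ + R σ')
    (θ θ' : Θ)
    (hθ : (∀ x ∈ A, f θ x = 1) ∧ (∀ x ∈ B, f θ' x = 1) ∧ (∀ x, f θ x + f θ' x ≤ 1))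
    (hCpos : 0 < R θC) (hSpos : 0 < R θS + R θS') :
    (min (R θ) (R (n θ')) : ℝ) / (R θC : ℝ) ≤
      ((R θ : ℝ) + (R θ' : ℝ)) / ((R θS : ℝ) + (R θS' : ℝ)) := by
  obtain ⟨hθA, hθ'B, hsum⟩ := hθ
  -- (θC, n θC) is a feasible partial pair
  have hpair : R θS + R θS' ≤ 2 * R θC := by
    have := hθSopt θC (n θC) ⟨hθC.1, fun x hx => by
      rw [hn]; rw [hθC.2 x hx],
      fun x => by
        rw [hn]
        have := hf01 θC x
        omega⟩
    have h2 := hnR θC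
    omega
  -- 2 * min ≤ R θ + R θ'
  have hmin : 2 * min (R θ) (R (n θ')) ≤ R θ + R θ' := by
    have h1 : min (R θ) (R (n θ')) ≤ R θ := min_le_left _ _
    have h2 : min (R θ) (R (n θ')) ≤ R θ' := le_trans (min_le_right _ _) (hnR θ')
    omega
  have key : min (R θ) (R (n θ')) * (R θS + R θS') ≤ (R θ + R θ') * R θC := by
    calc min (R θ) (R (n θ')) * (R θS + R θS')
        ≤ min (R θ) (R (n θ')) * (2 * R θC) := Nat.mul_le_mul_left _ hpair
      _ = (2 * min (R θ) (R (n θ'))) * R θC := by ring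
      _ ≤ (R θ + R θ') * R θC := Nat.mul_le_mul_right _ hmin
  rw [div_le_div_iff₀ (by exact_mod_cast hCpos) (by push_cast; exact_mod_cast hSpos)]
  push_cast
  exact_mod_cast key
end

section
/- Let U be finite nonempty and Σ ⊆ 2^U such that a set cover exists. Let Σ̂ be a minimum set cover, let (θ̂,θ̂') be a DNF pair minimizing R_l(θ)+R_l(θ') among feasible pairs for the Haussler data, and let (θ,θ') be any feasible pair with extracted cover g(θ,θ') of size min(|Σ₀'|,|Σ₁'|). Then |g(θ,θ')| / |Σ̂| ≤ (R_l(θ)+R_l(θ')) / (R_l(θ̂)+R_l(θ̂')). -/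
/-- Feasibility of a DNF pair for the Haussler data of a set-cover instance. -/
def Feasible {U : Type} [Fintype U] [DecidableEq U]
    (Sig : Finset (Finset U)) (θ θ' : Finset (Finset (Finset U) × Finset (Finset U))) : Prop :=
  (∀ p ∈ θ, p.1 ⊆ Sig ∧ p.2 ⊆ Sig ∧ Disjoint p.1 p.2) ∧
  (∀ p ∈ θ', p.1 ⊆ Sig ∧ p.2 ⊆ Sig ∧ Disjoint p.1 p.2) ∧
  (∀ u : U, dnfEval θ (fun σ => decide (u ∈ σ)) = 1) ∧
  dnfEval θ' (fun _ => false) = 1 ∧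
  (∀ x : Finset U → Bool, dnfEval θ x + dnfEval θ' x ≤ 1)

/-- the performance ratio of the extracted cover wrt a minimum cover is
bounded by the performance ratio (wrt length) of the feasible DNF pair. -/
theorem stmt_14 {U : Type} [Fintype U] [DecidableEq U] [Nonempty U]
    (Sig : Finset (Finset U))
    (SigHat : Finset (Finset U)) (hSigHat : SigHat ⊆ Sig ∧ ∀ u : U, ∃ σ ∈ SigHat, u ∈ σ)
    (hSigHatOpt : ∀ Sig' : Finset (Finset U),
      (Sig' ⊆ Sig ∧ ∀ u : U, ∃ σ ∈ Sig', u ∈ σ) → SigHat.card ≤ Sig'.card)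
    (θHat θHat' : Finset (Finset (Finset U) × Finset (Finset U)))
    (hθHat : Feasible Sig θHat θHat')
    (hθHatOpt : ∀ σ σ' : Finset (Finset (Finset U) × Finset (Finset U)),
      Feasible Sig σ σ' → dnfLength θHat + dnfLength θHat' ≤ dnfLength σ + dnfLength σ')
    (θ θ' : Finset (Finset (Finset U) × Finset (Finset U))) (hθ : Feasible Sig θ θ')
    (Sig₁' : Finset (Finset U)) (hSig₁' : ((∅ : Finset (Finset U)), Sig₁') ∈ θ')
    (hcovpos : 0 < SigHat.card) (hLpos : 0 < dnfLength θHat + dnfLength θHat') :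
    ((min (θ.biUnion (fun p => p.1)).card Sig₁'.card : ℕ) : ℝ) / (SigHat.card : ℝ) ≤
      ((dnfLength θ : ℝ) + (dnfLength θ' : ℝ)) /
        ((dnfLength θHat : ℝ) + (dnfLength θHat' : ℝ)) := by

  classical
  have ha : (θ.biUnion (fun p => p.1)).card ≤ dnfLength θ := by
    calc (θ.biUnion (fun p => p.1)).card ≤ ∑ p ∈ θ, p.1.card := Finset.card_biUnion_le
    _ ≤ ∑ p ∈ θ, (p.1.card + p.2.card) :=
        Finset.sum_le_sum (fun p _ => Nat.le_add_right _ _)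
  have hb : Sig₁'.card ≤ dnfLength θ' := by
    have := Finset.single_le_sum
      (f := fun p : Finset (Finset U) × Finset (Finset U) => p.1.card + p.2.card)
      (fun _ _ => Nat.zero_le _) hSig₁'
    simpa [dnfLength] using this
  set a := (θ.biUnion (fun p => p.1)).card with ha_def
  set b := Sig₁'.card with hb_def
  have h2min : 2 * min a b ≤ dnfLength θ + dnfLength θ' := by
    have h1 := min_le_left a b
    have h2 := min_le_right a b
    omega
  -- candidate pair from SigHat
  set θc : Finset (Finset (Finset U) × Finset (Finset U)) :=
    SigHat.image (fun σ => ({σ}, ∅)) with hθc_def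
  set θc' : Finset (Finset (Finset U) × Finset (Finset U)) := {(∅, SigHat)} with hθc'_def
  have hfeas : Feasible Sig θc θc' := by
    refine ⟨?_, ?_, ?_, ?_, ?_⟩
    · intro p hp
      simp only [hθc_def, Finset.mem_image] at hp
      obtain ⟨σ, hσ, rfl⟩ := hp
      refine ⟨?_, ?_, ?_⟩
      · intro v hv; simp only [Finset.mem_singleton] at hv; subst hv; exact hSigHat.1 hσ
      · simp
      · simp
    · intro p hp
      simp only [hθc'_def, Finset.mem_singleton] at hp
      subst hp
      exact ⟨by simp, hSigHat.1, by simp⟩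
    · intro u
      obtain ⟨σ, hσ, huσ⟩ := hSigHat.2 u
      rw [dnfEval, if_pos]
      exact ⟨({σ}, ∅), by simp [hθc_def, hσ], by simp [huσ], by simp⟩
    · rw [dnfEval, if_pos]
      exact ⟨(∅, SigHat), by simp [hθc'_def], by simp, by simp⟩
    · intro x
      rw [dnfEval, dnfEval]
      split_ifs with h1 h2
      · exfalso
        obtain ⟨p, hp, hp1, _⟩ := h1
        simp only [hθc_def, Finset.mem_image] at hp
        obtain ⟨σ, hσ, rfl⟩ := hp
        obtain ⟨q, hq, _, hq2⟩ := h2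
        simp only [hθc'_def, Finset.mem_singleton] at hq
        subst hq
        have hx1 := hp1 σ (by simp)
        have hx2 := hq2 σ hσ
        rw [hx1] at hx2; exact Bool.noConfusion hx2
      · omega
      · omega
      · omega
  have hlen : dnfLength θc + dnfLength θc' = 2 * SigHat.card := by
    have hinj : Set.InjOn (fun σ : Finset U => (({σ}, ∅) : Finset (Finset U) × Finset (Finset U))) SigHat := by
      intro x _ y _ h
      simpa using congrArg (fun p => p.1) h
    have h1 : dnfLength θc = SigHat.card := by
      rw [hθc_def, dnfLength, Finset.sum_image (fun x hx y hy h => hinj hx hy h)]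
      simp
    have h2 : dnfLength θc' = SigHat.card := by
      simp [hθc'_def, dnfLength]
    omega
  have hL : dnfLength θHat + dnfLength θHat' ≤ 2 * SigHat.card :=
    hlen ▸ hθHatOpt θc θc' hfeas
  have key : min a b * (dnfLength θHat + dnfLength θHat') ≤
      SigHat.card * (dnfLength θ + dnfLength θ') := by
    calc min a b * (dnfLength θHat + dnfLength θHat')
        ≤ min a b * (2 * SigHat.card) := Nat.mul_le_mul_left _ hL
      _ = (2 * min a b) * SigHat.card := by ring
      _ ≤ (dnfLength θ + dnfLength θ') * SigHat.card := Nat.mul_le_mul_right _ h2min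
      _ = SigHat.card * (dnfLength θ + dnfLength θ') := Nat.mul_comm _ _
  have hc : (0:ℝ) < (SigHat.card : ℝ) := by exact_mod_cast hcovpos
  have hd : (0:ℝ) < (dnfLength θHat : ℝ) + (dnfLength θHat' : ℝ) := by
    have : (0:ℝ) < ((dnfLength θHat + dnfLength θHat' : ℕ) : ℝ) := by exact_mod_cast hLpos
    push_cast at this; linarith
  rw [div_le_div_iff₀ hc hd]
  push_cast
  exact_mod_cast key.trans_eq (Nat.mul_comm _ _)
end
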